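/- Discrimination by dephasing-covariant channels equals discrimination by incoherent measurements: for any ensemble Ω = {(p_j, ρ_j)}, the supremum of Σ_j p_j tr(N(ρ_j)|j⟩⟨j|) over CPTP maps N satisfying Δ∘N = N∘Δ equals the maximum of Σ_j p_j tr(E_j ρ_j) over POVMs {E_j} all of whose elements are diagonal in the computational basis. -/

import Mathlib

open Matrix ComplexOrder

/-- The dephasing map: keep only the diagonal entries of a matrix. -/
def dephase {n : Type*} [Fintype n] [DecidableEq n] (A : Matrix n n ℂ) : Matrix n n ℂ :=
  Matrix.of fun i j => if i = j then A i j else 0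

/-- A density matrix: positive semidefinite with unit trace. -/
def IsDensity {n : Type*} [Fintype n] [DecidableEq n] (ρ : Matrix n n ℂ) : Prop :=
  ρ.PosSemidef ∧ ρ.trace = 1

/-- A POVM: positive semidefinite matrices summing to the identity. -/
def IsPOVM {n : Type*} [Fintype n] [DecidableEq n] {k : ℕ}
    (E : Fin k → Matrix n n ℂ) : Prop :=
  (∀ j, (E j).PosSemidef) ∧ ∑ j, E j = 1

/-- Completely positive trace-preserving maps, via Kraus decompositions. -/
def IsCPTP {n m : Type*} [Fintype n] [DecidableEq n] [Fintype m] [DecidableEq m]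
    (N : Matrix n n ℂ → Matrix m m ℂ) : Prop :=
  ∃ (r : ℕ) (K : Fin r → Matrix m n ℂ),
    (∀ X, N X = ∑ i, K i * X * (K i)ᴴ) ∧ ∑ i, (K i)ᴴ * K i = 1

/-- Dephasing-covariant incoherent operations: CPTP maps commuting with dephasing. -/
def IsDIO {n m : Type*} [Fintype n] [DecidableEq n] [Fintype m] [DecidableEq m]
    (N : Matrix n n ℂ → Matrix m m ℂ) : Prop :=
  IsCPTP N ∧ ∀ X, N (dephase X) = dephase (N X)

namespace DioAux

lemma sum_diag_eq_one {k : ℕ} :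
    ∑ j : Fin k, Matrix.single j j (1 : ℂ) = 1 := by
  ext a b
  simp only [Matrix.sum_apply, Matrix.single, of_apply, one_apply]
  simp [ite_and, Finset.sum_ite_eq, Finset.sum_ite_eq', eq_comm]

lemma trace_mul_diag {k : ℕ} (M : Matrix (Fin k) (Fin k) ℂ) (j : Fin k) :
    (M * Matrix.single j j (1 : ℂ)).trace = M j j := by
  simp [Matrix.trace, Matrix.diag, mul_apply, Matrix.single, ite_and, mul_ite,
    Finset.sum_ite_eq, Finset.sum_ite_eq']

lemma stdBasis_conjT {k d : ℕ} (i : Fin k) (j : Fin d) :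
    (Matrix.single i j (1 : ℂ))ᴴ = Matrix.single j i 1 := by
  ext a b
  simp [conjTranspose_apply, Matrix.single, and_comm]

lemma entry2 {k d : ℕ} (K : Matrix (Fin k) (Fin d) ℂ) (j : Fin k) (a b : Fin d) :
    (K * Matrix.single b a (1 : ℂ) * Kᴴ) j j = K j b * star (K j a) := by
  simp [mul_apply, Matrix.single, conjTranspose_apply, ite_and, mul_ite, ite_mul,
    Finset.sum_ite_eq, Finset.sum_ite_eq']

lemma entry1 {k d : ℕ} (K : Matrix (Fin k) (Fin d) ℂ) (j : Fin k) (a b : Fin d) :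
    (Kᴴ * Matrix.single j j (1 : ℂ) * K) a b = star (K j a) * K j b := by
  simp [mul_apply, Matrix.single, conjTranspose_apply, ite_and, mul_ite, ite_mul,
    Finset.sum_ite_eq, Finset.sum_ite_eq']

lemma sandwich {k d : ℕ} (j : Fin k) (M : Matrix (Fin d) (Fin d) ℂ) :
    ∑ l : Fin d, Matrix.single j l (1 : ℂ) * M * (Matrix.single j l (1 : ℂ))ᴴ
      = Matrix.single j j M.trace := by
  ext a b
  simp only [Matrix.sum_apply, mul_apply, Matrix.single, of_apply, conjTranspose_apply,
    Matrix.trace, Matrix.diag]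
  by_cases ha : j = a <;> by_cases hb : j = b <;>
    simp [ha, hb, ite_and, mul_ite, ite_mul, apply_ite (starRingEnd ℂ),
      Finset.sum_ite_eq, Finset.sum_ite_eq', eq_comm]

lemma stdBasis_mul_rect {k d : ℕ} (l : Fin d) (j : Fin k) (l' : Fin d) :
    Matrix.single l j (1 : ℂ) * Matrix.single j l' (1 : ℂ) = Matrix.single l l' 1 := by
  ext a b
  simp [mul_apply, Matrix.single, ite_and, mul_ite, ite_mul,
    Finset.sum_ite_eq, Finset.sum_ite_eq']
  split_ifs <;> rfl

lemma posSemidef_sum {d : ℕ} {ι : Type*} (s : Finset ι) (f : ι → Matrix (Fin d) (Fin d) ℂ)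
    (h : ∀ i ∈ s, (f i).PosSemidef) : (∑ i ∈ s, f i).PosSemidef :=
  Finset.sum_induction f _ (fun _ _ ha hb => ha.add hb) Matrix.PosSemidef.zero h

lemma dephase_apply_same {k : ℕ} (M : Matrix (Fin k) (Fin k) ℂ) (j : Fin k) :
    dephase M j j = M j j := by simp [dephase]

lemma diag_sum_apply {k : ℕ} (f : Fin k → ℂ) (j : Fin k) :
    (∑ i, Matrix.single i i (f i)) j j = f j := by
  simp [Matrix.sum_apply, Matrix.single, ite_and, Finset.sum_ite_eq, Finset.sum_ite_eq']

lemma trace_mul_dephase {d : ℕ} (E X : Matrix (Fin d) (Fin d) ℂ) (hE : E.IsDiag) :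
    (E * dephase X).trace = (E * X).trace := by
  simp only [Matrix.trace, Matrix.diag, mul_apply, dephase, of_apply]
  refine Finset.sum_congr rfl fun a _ => Finset.sum_congr rfl fun x _ => ?_
  by_cases h : x = a
  · subst h; simp
  · rw [hE (fun h' => h h'.symm)]; simp

end DioAux

open DioAux in
/-- Discrimination by dephasing-covariant channels equals discrimination by
incoherent measurements (POVMs all of whose elements are diagonal). -/
theorem dio_discrimination_eq_incoherent_povm_discrimination {d k : ℕ}
    (p : Fin k → ℝ) (ρ : Fin k → Matrix (Fin d) (Fin d) ℂ)
    (hp : ∀ j, 0 ≤ p j) (hpsum : ∑ j, p j = 1) (hρ : ∀ j, IsDensity (ρ j)) :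
    sSup {x : ℝ | ∃ N : Matrix (Fin d) (Fin d) ℂ → Matrix (Fin k) (Fin k) ℂ,
        IsDIO N ∧
        x = ∑ j, p j * ((N (ρ j) * Matrix.single j j (1 : ℂ)).trace.re)} =
    sSup {x : ℝ | ∃ E : Fin k → Matrix (Fin d) (Fin d) ℂ,
        IsPOVM E ∧ (∀ j, (E j).IsDiag) ∧
        x = ∑ j, p j * ((E j * ρ j).trace.re)} := by
  congr 1
  ext x
  constructor
  · -- DIO channel → incoherent POVM
    rintro ⟨N, ⟨⟨r, K, hKN, hK1⟩, hcov⟩, rfl⟩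
    refine ⟨fun j => ∑ i, (K i)ᴴ * Matrix.single j j (1 : ℂ) * K i, ⟨?_, ?_⟩, ?_, ?_⟩
    · -- PSD
      intro j
      beta_reduce
      refine posSemidef_sum _ _ fun i _ => ?_
      have hePSD : (Matrix.single j j (1 : ℂ)).PosSemidef := by
        have h4 := Matrix.posSemidef_conjTranspose_mul_self (Matrix.single j j (1 : ℂ))
        rwa [stdBasis_conjT, Matrix.single_mul_single_same, one_mul] at h4
      have h5 := hePSD.mul_mul_conjTranspose_same ((K i)ᴴ)
      rwa [conjTranspose_conjTranspose] at h5
    · -- sums to 1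
      beta_reduce
      rw [Finset.sum_comm]
      have hrow : ∀ i, ∑ j, (K i)ᴴ * (Matrix.single j j (1 : ℂ) : Matrix (Fin k) (Fin k) ℂ) * K i = (K i)ᴴ * K i := by
        intro i
        rw [← Matrix.sum_mul, ← Matrix.mul_sum, sum_diag_eq_one, Matrix.mul_one]
      calc ∑ i, ∑ j, (K i)ᴴ * (Matrix.single j j (1 : ℂ) : Matrix (Fin k) (Fin k) ℂ) * K i
          = ∑ i, (K i)ᴴ * K i := Finset.sum_congr rfl fun i _ => hrow i
        _ = 1 := hK1
    · -- diagonal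
      intro j
      beta_reduce
      intro a b hab
      have h0 : dephase (Matrix.single b a (1 : ℂ)) = 0 := by
        ext u v
        simp only [dephase, of_apply, Matrix.single, Matrix.zero_apply]
        split_ifs with h1 h2
        · rcases h2 with ⟨rfl, rfl⟩; exact absurd h1.symm hab
        · rfl
        · rfl
      have hN0 : N 0 = 0 := by rw [hKN 0]; simp
      have hd : dephase (N (Matrix.single b a (1 : ℂ))) = 0 := by
        rw [← hcov, h0, hN0]
      have hjj : (N (Matrix.single b a (1 : ℂ))) j j = 0 :=
        calc (N (Matrix.single b a (1 : ℂ))) j j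
            = dephase (N (Matrix.single b a (1 : ℂ))) j j :=
              (dephase_apply_same _ j).symm
          _ = 0 := by rw [hd]; rfl
      calc (∑ i, (K i)ᴴ * Matrix.single j j (1 : ℂ) * K i) a b
          = ∑ i, star (K i j a) * K i j b := by
            rw [Matrix.sum_apply]
            exact Finset.sum_congr rfl fun i _ => entry1 (K i) j a b
        _ = ∑ i, (K i * Matrix.single b a (1 : ℂ) * (K i)ᴴ) j j := by
            refine Finset.sum_congr rfl fun i _ => ?_
            rw [entry2, mul_comm]
        _ = (N (Matrix.single b a (1 : ℂ))) j j := by rw [hKN, Matrix.sum_apply]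
        _ = 0 := hjj
    · -- value
      beta_reduce
      refine Finset.sum_congr rfl fun j _ => ?_
      congr 2
      have h1 : (N (ρ j) * Matrix.single j j (1 : ℂ)).trace = (N (ρ j)) j j :=
        trace_mul_diag _ j
      have h2 : ((∑ i, (K i)ᴴ * Matrix.single j j (1 : ℂ) * K i) * ρ j).trace
          = (N (ρ j)) j j := by
        rw [Finset.sum_mul, Matrix.trace_sum, hKN, Matrix.sum_apply]
        refine Finset.sum_congr rfl fun i _ => ?_
        rw [Matrix.mul_assoc ((K i)ᴴ * Matrix.single j j (1 : ℂ)) (K i) (ρ j),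
          Matrix.trace_mul_comm, ← Matrix.mul_assoc, trace_mul_diag]
      rw [h1, h2]
  · -- incoherent POVM → DIO channel
    rintro ⟨E, ⟨hEpsd, hEsum⟩, hdiag, rfl⟩
    open scoped MatrixOrder in
    set S : Fin k → Matrix (Fin d) (Fin d) ℂ := fun j => CFC.sqrt (E j) with hS
    have hSH : ∀ j, (S j)ᴴ = S j := fun j => by
      open scoped MatrixOrder in exact (CFC.sqrt_nonneg (E j)).posSemidef.1
    have hSS : ∀ j, S j * S j = E j := fun j => by
      open scoped MatrixOrder in exact CFC.sqrt_mul_sqrt_self (E j) (hEpsd j).nonneg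
    set K' : Fin k × Fin d → Matrix (Fin k) (Fin d) ℂ :=
      fun q => Matrix.single q.1 q.2 (1 : ℂ) * S q.1 with hK'
    refine ⟨fun X => ∑ j, Matrix.single j j ((E j * X).trace),
      ⟨⟨k * d, fun i => K' (finProdFinEquiv.symm i), ?_, ?_⟩, ?_⟩, ?_⟩
    · -- Kraus form
      intro X
      beta_reduce
      rw [Equiv.sum_comp finProdFinEquiv.symm
        (fun q => K' q * X * (K' q)ᴴ), Fintype.sum_prod_type]
      refine Finset.sum_congr rfl fun j _ => ?_
      have hkl : ∀ l : Fin d, K' (j, l) * X * (K' (j, l))ᴴ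
          = Matrix.single j l (1 : ℂ) * (S j * X * S j) * (Matrix.single j l (1 : ℂ))ᴴ := by
        intro l
        simp only [hK']
        rw [conjTranspose_mul, hSH]
        simp only [Matrix.mul_assoc]
      rw [Finset.sum_congr rfl fun l _ => hkl l, sandwich]
      congr 1
      conv_rhs => rw [Matrix.trace_mul_comm, ← mul_assoc, hSS j]
    · -- trace preserving
      rw [Equiv.sum_comp finProdFinEquiv.symm
        (fun q => (K' q)ᴴ * K' q), Fintype.sum_prod_type]
      have hkl : ∀ (j : Fin k) (l : Fin d),
          (K' (j, l))ᴴ * K' (j, l) = S j * Matrix.single l l (1 : ℂ) * S j := by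
        intro j l
        simp only [hK']
        rw [conjTranspose_mul, hSH, stdBasis_conjT,
          ← Matrix.mul_assoc (S j * Matrix.single l j (1 : ℂ))
            (Matrix.single j l (1 : ℂ)) (S j),
          Matrix.mul_assoc (S j) (Matrix.single l j (1 : ℂ)) (Matrix.single j l (1 : ℂ)),
          stdBasis_mul_rect]
      calc ∑ j, ∑ l, (K' (j, l))ᴴ * K' (j, l)
          = ∑ j, S j * (∑ l, Matrix.single l l (1 : ℂ)) * S j := by
            refine Finset.sum_congr rfl fun j _ => ?_
            rw [Finset.mul_sum, Finset.sum_mul]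
            exact Finset.sum_congr rfl fun l _ => hkl j l
        _ = ∑ j, E j := by
            rw [sum_diag_eq_one]
            exact Finset.sum_congr rfl fun j _ => by rw [mul_one, hSS j]
        _ = 1 := hEsum
    · -- dephasing covariance
      intro X
      beta_reduce
      have hdiagN : ∀ Y : Matrix (Fin d) (Fin d) ℂ,
          dephase (∑ j, Matrix.single j j ((E j * Y).trace))
            = ∑ j, Matrix.single j j ((E j * Y).trace) := by
        intro Y
        ext a b
        by_cases h : a = b
        · subst h; simp [dephase]
        · simp only [dephase, of_apply, h, if_false, Matrix.sum_apply]
          symm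
          refine Finset.sum_eq_zero fun j _ => ?_
          exact Matrix.single_apply_of_ne
            (c := (E j * Y).trace) (h := fun hc : j = a ∧ j = b => h (hc.1.symm.trans hc.2))
      rw [hdiagN X]
      refine Finset.sum_congr rfl fun j _ => ?_
      rw [trace_mul_dephase (E j) X (hdiag j)]
    · -- value
      beta_reduce
      refine Finset.sum_congr rfl fun j _ => ?_
      congr 2
      rw [trace_mul_diag, diag_sum_apply (fun i => (E i * ρ j).trace) j]
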